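/- arXiv:2206.01697 — 9 statements merged into one kernel-verified Lean document; each statement's English description precedes it below -/
import Mathlib

section
/- For all α ∈ (0, 1/2], the inequality (4(1-α)²/(2-α)²)·(1 - sin²(πα/2)/(α(2-α))) > (4cos²(π/(3-α)))² holds. -/
/-!
Both sides are bounded by rational functions of `α`. Writing `π / (3 - α) = π / 3 + h / 2`,
the double-angle formula gives `4 cos² (π / (3 - α)) = 2 - cos h - √3 sin h`, which is bounded
above using `cos h ≥ 1 - h² / 2`, `sin h ≥ h - h³ / 6` and `√3 ≥ 1.732`. On the left,
`sin² x = (1 - cos 2x) / 2` and the sixth-order Taylor bound for `cos` give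
`sin² x ≤ x² - x⁴ / 3 + 2 x⁶ / 45`. Monotonicity of `sin` and `cos` lets `π` be replaced by
rational bounds inside the arguments, and what remains is a rational inequality in `α`. The two sides agree at `α = 0` and differ by only about
`0.002` at `α = 1/2`, which is why these fairly sharp bounds are needed.
-/

open Real

lemma nonneg_of_hasDerivAt_nonneg {f f' : ℝ → ℝ} (hf : ∀ x, HasDerivAt f (f' x) x)
    (hf₀ : f 0 = 0) (hf' : ∀ x, 0 ≤ x → 0 ≤ f' x) {x : ℝ} (hx : 0 ≤ x) : 0 ≤ f x := by
  have hmono : MonotoneOn f (Set.Ici 0) :=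
    monotoneOn_of_hasDerivWithinAt_nonneg (convex_Ici 0)
      (fun y _ => (hf y).continuousAt.continuousWithinAt) (fun y _ => (hf y).hasDerivWithinAt)
      (fun y hy => hf' y (interior_subset hy))
  simpa [hf₀] using hmono Set.self_mem_Ici hx hx

namespace Real

lemma cos_le_taylor_four {x : ℝ} (hx : 0 ≤ x) : cos x ≤ 1 - x ^ 2 / 2 + x ^ 4 / 24 := by
  have key := nonneg_of_hasDerivAt_nonneg (f := fun t => 1 - t ^ 2 / 2 + t ^ 4 / 24 - cos t)
    (f' := fun t => -t + t ^ 3 / 6 + sin t)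
    (fun t => by
      refine ((((hasDerivAt_const t 1).sub ((hasDerivAt_pow 2 t).div_const 2)).add
        ((hasDerivAt_pow 4 t).div_const 24)).sub (hasDerivAt_cos t)).congr_deriv ?_
      ring)
    (by simp) (fun t ht => by have := sin_ge_sub_cube ht; linarith) hx
  linarith

lemma sin_le_taylor_five {x : ℝ} (hx : 0 ≤ x) : sin x ≤ x - x ^ 3 / 6 + x ^ 5 / 120 := by
  have key := nonneg_of_hasDerivAt_nonneg (f := fun t => t - t ^ 3 / 6 + t ^ 5 / 120 - sin t)
    (f' := fun t => 1 - t ^ 2 / 2 + t ^ 4 / 24 - cos t)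
    (fun t => by
      refine ((((hasDerivAt_id t).sub ((hasDerivAt_pow 3 t).div_const 6)).add
        ((hasDerivAt_pow 5 t).div_const 120)).sub (hasDerivAt_sin t)).congr_deriv ?_
      ring)
    (by simp) (fun t ht => by have := cos_le_taylor_four ht; linarith) hx
  linarith

lemma taylor_six_le_cos (x : ℝ) : 1 - x ^ 2 / 2 + x ^ 4 / 24 - x ^ 6 / 720 ≤ cos x := by
  have key := nonneg_of_hasDerivAt_nonneg
    (f := fun t => cos t - (1 - t ^ 2 / 2 + t ^ 4 / 24 - t ^ 6 / 720))
    (f' := fun t => t - t ^ 3 / 6 + t ^ 5 / 120 - sin t)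
    (fun t => by
      refine ((hasDerivAt_cos t).sub ((((hasDerivAt_const t 1).sub
        ((hasDerivAt_pow 2 t).div_const 2)).add ((hasDerivAt_pow 4 t).div_const 24)).sub
        ((hasDerivAt_pow 6 t).div_const 720))).congr_deriv ?_
      ring)
    (by simp) (fun t ht => by have := sin_le_taylor_five ht; linarith) (abs_nonneg x)
  simp only [cos_abs, Even.pow_abs (by decide : Even 2), Even.pow_abs (by decide : Even 4),
    Even.pow_abs (by decide : Even 6)] at key
  linarith

lemma sin_sq_le_taylor (x : ℝ) : sin x ^ 2 ≤ x ^ 2 - x ^ 4 / 3 + 2 * x ^ 6 / 45 := by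
  rw [sin_sq_eq_half_sub]
  linarith [taylor_six_le_cos (2 * x)]

lemma four_mul_cos_sq_pi_div_three_add_le {h : ℝ} (h₀ : 0 ≤ h) (h₁ : h ≤ π) :
    4 * cos (π / 3 + h / 2) ^ 2 ≤ 1 + h ^ 2 / 2 - 433 / 250 * (h - h ^ 3 / 6) := by
  have hcos : 4 * cos (π / 3 + h / 2) ^ 2 = 2 - cos h - √3 * sin h := by
    rw [cos_sq, show 2 * (π / 3 + h / 2) = π - (π / 3 - h) by ring, cos_pi_sub, cos_sub,
      cos_pi_div_three, sin_pi_div_three]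
    ring
  have hsqrt : (433 / 250 : ℝ) ≤ √3 := by
    rw [le_sqrt (by norm_num) (by norm_num)]; norm_num
  have hsin := mul_le_mul_of_nonneg_right hsqrt (sin_nonneg_of_nonneg_of_le_pi h₀ h₁)
  have := sin_ge_sub_cube h₀
  have := one_sub_sq_div_two_le_cos (x := h)
  nlinarith

end Real

/- The constants `3927 / 2500 = 3.1416 / 2` and `6283 / 3000 = 2 * 3.1415 / 3` come from
`3.1415 < π < 3.1416`. -/

lemma four_mul_cos_sq_pi_div_le {α : ℝ} (h0 : 0 ≤ α) (h1 : α ≤ 1) :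
    4 * cos (π / (3 - α)) ^ 2 ≤
      1 + (6283 / 3000 * α / (3 - α)) ^ 2 / 2
        - 433 / 250 * (6283 / 3000 * α / (3 - α) - (6283 / 3000 * α / (3 - α)) ^ 3 / 6) := by
  have h3 : 0 < 3 - α := by linarith
  have hpi := pi_gt_d4
  have hh₀ : 0 ≤ 6283 / 3000 * α / (3 - α) := by positivity
  have hh₁ : 6283 / 3000 * α / (3 - α) ≤ π := by
    rw [div_le_iff₀ h3]; nlinarith
  have hangle : π / 3 + 6283 / 3000 * α / (3 - α) / 2 ≤ π / (3 - α) := by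
    field_simp
    nlinarith
  have hupper : π / (3 - α) ≤ π / 2 := by
    gcongr; linarith
  have hcos : cos (π / (3 - α)) ≤ cos (π / 3 + 6283 / 3000 * α / (3 - α) / 2) :=
    cos_le_cos_of_nonneg_of_le_pi (by positivity) (by linarith) hangle
  have hcos₀ : 0 ≤ cos (π / (3 - α)) :=
    cos_nonneg_of_neg_pi_div_two_le_of_le (by linarith [pi_pos]) hupper
  calc 4 * cos (π / (3 - α)) ^ 2 ≤ 4 * cos (π / 3 + 6283 / 3000 * α / (3 - α) / 2) ^ 2 := by
        gcongr
    _ ≤ _ := four_mul_cos_sq_pi_div_three_add_le hh₀ hh₁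

lemma le_mul_one_sub_sin_sq_div {α : ℝ} (h0 : 0 < α) (h1 : α ≤ 1 / 2) :
    4 * (1 - α) ^ 2 / (2 - α) ^ 2 * (1 - ((3927 / 2500 * α) ^ 2 - (3927 / 2500 * α) ^ 4 / 3
        + 2 * (3927 / 2500 * α) ^ 6 / 45) / (α * (2 - α))) ≤
      4 * (1 - α) ^ 2 / (2 - α) ^ 2 * (1 - sin (π * α / 2) ^ 2 / (α * (2 - α))) := by
  have hpi := pi_lt_d4
  have hx : π * α / 2 ≤ 3927 / 2500 * α := by nlinarith
  have hsin : sin (π * α / 2) ≤ sin (3927 / 2500 * α) :=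
    sin_le_sin_of_le_of_le_pi_div_two (by nlinarith [pi_pos]) (by nlinarith [pi_gt_d4]) hx
  have hsin₀ : 0 ≤ sin (π * α / 2) :=
    sin_nonneg_of_nonneg_of_le_pi (by positivity) (by nlinarith [pi_pos])
  have hsq := (pow_le_pow_left₀ hsin₀ hsin 2).trans (sin_sq_le_taylor (3927 / 2500 * α))
  have hd : 0 < α * (2 - α) := mul_pos h0 (by linarith)
  gcongr

lemma cos_bound_sq_lt_sin_bound {α : ℝ} (h0 : 0 < α) (h1 : α ≤ 1 / 2) :
    (1 + (6283 / 3000 * α / (3 - α)) ^ 2 / 2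
        - 433 / 250 * (6283 / 3000 * α / (3 - α) - (6283 / 3000 * α / (3 - α)) ^ 3 / 6)) ^ 2 <
      4 * (1 - α) ^ 2 / (2 - α) ^ 2 * (1 - ((3927 / 2500 * α) ^ 2 - (3927 / 2500 * α) ^ 4 / 3
        + 2 * (3927 / 2500 * α) ^ 6 / 45) / (α * (2 - α))) := by
  have h2 : 0 < 2 - α := by linarith
  have h3 : 0 < 3 - α := by linarith
  have hb : 0 ≤ 1 / 2 - α := by linarith
  have hbern : ∀ i j : ℕ, 0 ≤ α ^ i * (1 / 2 - α) ^ j :=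
    fun i j => mul_nonneg (pow_nonneg h0.le i) (pow_nonneg hb j)
  rw [div_pow, ← sub_pos]
  field_simp
  -- After clearing denominators the difference is `α` times a degree-12 polynomial whose
  -- Bernstein coefficients on `[0, 1/2]` are all positive.
  linarith [hbern 1 12, hbern 2 11, hbern 3 10, hbern 4 9, hbern 5 8, hbern 6 7, hbern 7 6,
    hbern 8 5, hbern 9 4, hbern 10 3, hbern 11 2, hbern 12 1, pow_pos h0 13]

theorem stmt_0 (α : ℝ) (h0 : 0 < α) (h1 : α ≤ 1/2) :
    (4*(1-α)^2/(2-α)^2) * (1 - (sin (π*α/2))^2 / (α*(2-α))) >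
      (4 * (cos (π/(3-α)))^2)^2 := by
  calc (4 * cos (π / (3 - α)) ^ 2) ^ 2 ≤ _ :=
        pow_le_pow_left₀ (by positivity) (four_mul_cos_sq_pi_div_le h0.le (by linarith)) 2
    _ < _ := cos_bound_sq_lt_sin_bound h0 h1
    _ ≤ _ := le_mul_one_sub_sin_sq_div h0 h1
end

section
/- For all α ∈ (0, 1/2] and t ∈ (0, π/2), the function G(t,α) = (1+α)cos((3-2α)t) + (3-α)cos((1-2α)t) − (1-α)²cos(3t) − (1+α)(3-α)cos(t) is strictly positive. -/
/-!
Put `u = (1 - α) t`. Expanding the cosines gives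
`t G(t, α) = 4 (sin u · φ_t(u) + t cos t ((1 - α) sin t - sin u)²)` with
`φ_t(u) = u sin t cos u + 2 u sin t cos t - 3 t cos t sin u`.
Since `φ_t(0) = φ_t(t) = 0`, it suffices that `φ_t` is strictly concave on `[0, t]`; its second
derivative `3 t cos t sin u - sin t (2 sin u + u cos u)` is negative there by Huygens' inequality
`3 t < 2 tan t + sin t` together with `cos t < cos u` and `sin u < u`.
-/

open Real Set

/-- Huygens' inequality. -/
theorem three_mul_lt_two_mul_tan_add_sin {t : ℝ} (ht0 : 0 < t) (ht1 : t < π / 2) :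
    3 * t < 2 * tan t + sin t := by
  have hcos : ∀ x ∈ Ico 0 (π / 2), 0 < cos x := fun x hx =>
    cos_pos_of_mem_Ioo ⟨by linarith [pi_pos, hx.1], hx.2⟩
  let f : ℝ → ℝ := fun x => 2 * tan x + sin x - 3 * x
  have hcont : ContinuousOn f (Ico 0 (π / 2)) :=
    (((continuousOn_tan.mono fun x hx => (hcos x hx).ne').const_smul (2 : ℝ)).add
      continuous_sin.continuousOn).sub (continuous_const.mul continuous_id).continuousOn
  have hderiv : ∀ x ∈ interior (Ico 0 (π / 2)), 0 < deriv f x := by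
    intro x hx
    rw [interior_Ico] at hx
    have hc : 0 < cos x := hcos x (Ioo_subset_Ico_self hx)
    have hc1 : cos x < 1 := by
      simpa using cos_lt_cos_of_nonneg_of_le_pi le_rfl (by linarith [pi_pos, hx.2]) hx.1
    have hf' : HasDerivAt f (2 * (1 / cos x ^ 2) + cos x - 3) x :=
      (((hasDerivAt_tan hc.ne').const_mul 2).add (hasDerivAt_sin x)).sub
        ((hasDerivAt_id x).const_mul 3) |>.congr_deriv (by simp)
    rw [hf'.deriv]
    have hnum : 0 < (1 - cos x) * (2 + 2 * cos x - cos x ^ 2) := by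
      apply mul_pos <;> nlinarith
    have hfactor : 2 * (1 / cos x ^ 2) + cos x - 3
        = (1 - cos x) * (2 + 2 * cos x - cos x ^ 2) / cos x ^ 2 := by
      field_simp
      ring
    rw [hfactor]
    positivity
  have := strictMonoOn_of_deriv_pos (convex_Ico 0 (π / 2)) hcont hderiv
    ⟨le_rfl, by linarith [pi_pos]⟩ ⟨ht0.le, ht1⟩ ht0
  simp only [f, tan_zero, sin_zero] at this
  linarith

theorem three_mul_mul_cos_lt {t : ℝ} (ht0 : 0 < t) (ht1 : t < π / 2) :
    3 * t * cos t < (2 + cos t) * sin t := by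
  have hcos : 0 < cos t := cos_pos_of_mem_Ioo ⟨by linarith [pi_pos], ht1⟩
  calc 3 * t * cos t < (2 * tan t + sin t) * cos t :=
        mul_lt_mul_of_pos_right (three_mul_lt_two_mul_tan_add_sin ht0 ht1) hcos
    _ = (2 + cos t) * sin t := by
        rw [tan_eq_sin_div_cos]
        field_simp

noncomputable def phi (t u : ℝ) : ℝ :=
  u * sin t * cos u + 2 * u * sin t * cos t - 3 * t * cos t * sin u

theorem hasDerivAt_phi (t u : ℝ) :
    HasDerivAt (phi t)
      (sin t * (cos u - u * sin u) + 2 * sin t * cos t - 3 * t * cos t * cos u) u := by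
  have h := ((((hasDerivAt_id' u).mul_const (sin t)).fun_mul (hasDerivAt_cos u)).add
    ((((hasDerivAt_id' u).const_mul 2).mul_const (sin t)).mul_const (cos t))).sub
    ((hasDerivAt_sin u).const_mul (3 * t * cos t))
  exact h.congr_deriv (by ring)

theorem deriv2_phi (t u : ℝ) :
    deriv^[2] (phi t) u = 3 * t * cos t * sin u - sin t * (2 * sin u + u * cos u) := by
  have h1 : deriv (phi t) =
      fun u => sin t * (cos u - u * sin u) + 2 * sin t * cos t - 3 * t * cos t * cos u :=
    funext fun u => (hasDerivAt_phi t u).deriv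
  have h2 := ((((hasDerivAt_cos u).sub ((hasDerivAt_id' u).fun_mul (hasDerivAt_sin u))).const_mul
    (sin t)).add_const (2 * sin t * cos t)).sub ((hasDerivAt_cos u).const_mul (3 * t * cos t))
  rw [Function.iterate_succ_apply, Function.iterate_one, h1]
  exact (h2.congr_deriv (by ring)).deriv

theorem strictConcaveOn_phi {t : ℝ} (ht0 : 0 < t) (ht1 : t < π / 2) :
    StrictConcaveOn ℝ (Icc 0 t) (phi t) := by
  refine strictConcaveOn_of_deriv2_neg (convex_Icc 0 t)
    (fun u _ => (hasDerivAt_phi t u).continuousAt.continuousWithinAt) fun u hu => ?_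
  rw [interior_Icc] at hu
  obtain ⟨hu0, hut⟩ := hu
  rw [deriv2_phi]
  have hsint : 0 < sin t := sin_pos_of_pos_of_lt_pi ht0 (by linarith [pi_pos])
  have hsinu : 0 < sin u := sin_pos_of_pos_of_lt_pi hu0 (by linarith [pi_pos])
  have hcosu : 0 < cos u := cos_pos_of_mem_Ioo ⟨by linarith [pi_pos], by linarith⟩
  have hcos_lt : cos t < cos u := cos_lt_cos_of_nonneg_of_le_pi hu0.le (by linarith [pi_pos]) hut
  have h1 := mul_lt_mul_of_pos_right (three_mul_mul_cos_lt ht0 ht1) hsinu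
  have h2 := mul_lt_mul_of_pos_left hcos_lt (mul_pos hsint hsinu)
  have h3 := mul_lt_mul_of_pos_left (sin_lt hu0) (mul_pos hsint hcosu)
  nlinarith

theorem phi_pos {t u : ℝ} (ht1 : t < π / 2) (hu0 : 0 < u) (hut : u < t) : 0 < phi t u := by
  have ht0 : 0 < t := hu0.trans hut
  have hend : phi t 0 = 0 ∧ phi t t = 0 := by simp [phi]; ring
  have hmin := (strictConcaveOn_phi ht0 ht1).lt_on_openSegment (left_mem_Icc.2 ht0.le)
    (right_mem_Icc.2 ht0.le) ht0.ne (by rw [openSegment_eq_Ioo ht0]; exact ⟨hu0, hut⟩)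
  simpa [hend] using hmin

theorem mul_eq_sin_mul_phi_add (α t : ℝ) :
    t * ((1+α)*cos ((3-2*α)*t) + (3-α)*cos ((1-2*α)*t)
        - (1-α)^2*cos (3*t) - (1+α)*(3-α)*cos t)
      = 4 * (sin ((1-α)*t) * phi t ((1-α)*t)
        + t * cos t * ((1-α) * sin t - sin ((1-α)*t)) ^ 2) := by
  have e1 : (3-2*α)*t = t + 2*((1-α)*t) := by ring
  have e2 : (1-2*α)*t = 2*((1-α)*t) - t := by ring
  rw [e1, e2, cos_add, cos_sub, cos_two_mul, sin_two_mul, cos_three_mul, phi]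
  linear_combination (-4*(1-α)^2*t*cos t) * sin_sq_add_cos_sq t
    + (8*t*cos t) * sin_sq_add_cos_sq ((1-α)*t)

theorem stmt_2 (α t : ℝ) (hα0 : 0 < α) (hα1 : α ≤ 1/2)
    (ht0 : 0 < t) (ht1 : t < π/2) :
    0 < (1+α)*cos ((3-2*α)*t) + (3-α)*cos ((1-2*α)*t)
      - (1-α)^2*cos (3*t) - (1+α)*(3-α)*cos t := by
  have hu0 : 0 < (1-α)*t := mul_pos (by linarith) ht0
  have hut : (1-α)*t < t := by nlinarith
  have hsin : 0 < sin ((1-α)*t) := sin_pos_of_pos_of_lt_pi hu0 (by linarith [pi_pos])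
  have hcos : 0 < cos t := cos_pos_of_mem_Ioo ⟨by linarith [pi_pos], ht1⟩
  refine pos_of_mul_pos_right ?_ ht0.le
  rw [mul_eq_sin_mul_phi_add]
  have hphi := phi_pos ht1 hu0 hut
  positivity
end

section
/- For all α ∈ (0, 1/2], the derivative of U(t)/W(t) at any t∈(0,π/2) equals (sin((2-α)t)/sin t) times the derivative of V(t)/W(t) at t, where U(t) = 2sin(2(1-α)t) − 2(1-α)sin(2t), V(t) = (1+α)sin((1-α)t) − (1-α)sin((1+α)t), W(t) = (3-α)sin((1-α)t) − (1-α)sin((3-α)t), assuming W(t) ≠ 0. -/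
/-!
With `p = 1 - α`, the derivatives factor by `cos A - cos B = 2 sin ((A+B)/2) sin ((B-A)/2)`:
`U' = 8p sin((2-α)t) sin(αt)`, `V' = 2p(1+α) sin t sin(αt)`, `W' = 2p(3-α) sin t sin((2-α)t)`.
With these, `sin t (U'W - UW') - sin((2-α)t) (V'W - VW')` is `2p(3-α) sin t sin((2-α)t)` times
`sin(αt) W + sin((2-α)t) V - sin t U`, which vanishes by the product-to-sum formulas.
-/

open Real

namespace SineQuotient

noncomputable def U (α s : ℝ) : ℝ := 2 * sin (2 * (1 - α) * s) - 2 * (1 - α) * sin (2 * s)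

noncomputable def V (α s : ℝ) : ℝ := (1 + α) * sin ((1 - α) * s) - (1 - α) * sin ((1 + α) * s)

noncomputable def W (α s : ℝ) : ℝ := (3 - α) * sin ((1 - α) * s) - (1 - α) * sin ((3 - α) * s)

lemma hasDerivAt_const_mul_sin_sub (a b c d t : ℝ) :
    HasDerivAt (fun s => a * sin (b * s) - c * sin (d * s))
      (a * b * cos (b * t) - c * d * cos (d * t)) t := by
  exact (((hasDerivAt_const_mul b).sin.const_mul a).sub
    ((hasDerivAt_const_mul d).sin.const_mul c)).congr_deriv (by ring)

variable (α t : ℝ)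

lemma hasDerivAt_U : HasDerivAt (U α) (8 * (1 - α) * sin ((2 - α) * t) * sin (α * t)) t := by
  refine (hasDerivAt_const_mul_sin_sub 2 (2 * (1 - α)) (2 * (1 - α)) 2 t).congr_deriv ?_
  rw [show 2 * (1 - α) * t = (2 - α) * t - α * t by ring,
    show 2 * t = (2 - α) * t + α * t by ring, cos_sub, cos_add]
  ring

lemma hasDerivAt_V : HasDerivAt (V α) (2 * (1 - α) * (1 + α) * sin t * sin (α * t)) t := by
  refine (hasDerivAt_const_mul_sin_sub (1 + α) (1 - α) (1 - α) (1 + α) t).congr_deriv ?_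
  rw [show (1 - α) * t = t - α * t by ring, show (1 + α) * t = t + α * t by ring, cos_sub, cos_add]
  ring

lemma hasDerivAt_W : HasDerivAt (W α) (2 * (1 - α) * (3 - α) * sin t * sin ((2 - α) * t)) t := by
  refine (hasDerivAt_const_mul_sin_sub (3 - α) (1 - α) (1 - α) (3 - α) t).congr_deriv ?_
  rw [show (1 - α) * t = (2 - α) * t - t by ring, show (3 - α) * t = (2 - α) * t + t by ring,
    cos_sub, cos_add]
  ring

lemma sin_mul_W_add_sin_mul_V :
    sin (α * t) * W α t + sin ((2 - α) * t) * V α t = sin t * U α t := by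
  unfold U V W
  linear_combination (norm := ring_nf)
    (3 - α) / 2 * two_mul_sin_mul_sin ((1 - α) * t) (α * t)
    - (1 - α) / 2 * two_mul_sin_mul_sin ((3 - α) * t) (α * t)
    + (1 + α) / 2 * two_mul_sin_mul_sin ((2 - α) * t) ((1 - α) * t)
    - (1 - α) / 2 * two_mul_sin_mul_sin ((2 - α) * t) ((1 + α) * t)
    - two_mul_sin_mul_sin (2 * (1 - α) * t) t
    + (1 - α) * two_mul_sin_mul_sin (2 * t) t

end SineQuotient

open SineQuotient in
theorem stmt_3_general (α t : ℝ) (ht0 : 0 < t) (ht1 : t < π/2)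
    (hW : (3-α)*sin ((1-α)*t) - (1-α)*sin ((3-α)*t) ≠ 0) :
    deriv (fun s => (2*sin (2*(1-α)*s) - 2*(1-α)*sin (2*s)) /
        ((3-α)*sin ((1-α)*s) - (1-α)*sin ((3-α)*s))) t
      = (sin ((2-α)*t) / sin t) *
        deriv (fun s => ((1+α)*sin ((1-α)*s) - (1-α)*sin ((1+α)*s)) /
          ((3-α)*sin ((1-α)*s) - (1-α)*sin ((3-α)*s))) t := by
  change deriv (fun s => U α s / W α s) t = _ * deriv (fun s => V α s / W α s) t
  change W α t ≠ 0 at hW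
  have hsin : sin t ≠ 0 := (sin_pos_of_pos_of_lt_pi ht0 (by linarith [pi_pos])).ne'
  rw [((hasDerivAt_U α t).fun_div (hasDerivAt_W α t) hW).deriv,
    ((hasDerivAt_V α t).fun_div (hasDerivAt_W α t) hW).deriv, div_mul_div_comm, div_eq_div_iff (by positivity) (by positivity)]
  linear_combination W α t ^ 2 * 2 * (1 - α) * (3 - α) * sin t * sin ((2 - α) * t) *
    sin_mul_W_add_sin_mul_V α t

theorem stmt_3 (α t : ℝ) (hα0 : 0 < α) (hα1 : α ≤ 1/2)
    (ht0 : 0 < t) (ht1 : t < π/2)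
    (hW : (3-α)*sin ((1-α)*t) - (1-α)*sin ((3-α)*t) ≠ 0) :
    deriv (fun s => (2*sin (2*(1-α)*s) - 2*(1-α)*sin (2*s)) /
        ((3-α)*sin ((1-α)*s) - (1-α)*sin ((3-α)*s))) t
      = (sin ((2-α)*t) / sin t) *
        deriv (fun s => ((1+α)*sin ((1-α)*s) - (1-α)*sin ((1+α)*s)) /
          ((3-α)*sin ((1-α)*s) - (1-α)*sin ((3-α)*s))) t :=
  stmt_3_general α t ht0 ht1 hW
end

section
/- For all α ∈ (0, 1/2], cos²(π/(3-α)) < 1/4 − (√3/2)·(πα/(3(3-α))) + (1/2)·(πα/(3(3-α)))² + (√3/3)·(πα/(3(3-α)))³. -/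
open Real

lemma sin_ge_sub_cube' (t : ℝ) (ht : 0 ≤ t) : t - t^3/6 ≤ Real.sin t := by
  have h : MonotoneOn (fun u : ℝ => Real.sin u - u + u^3/6) (Set.Ici 0) := by
    apply monotoneOn_of_deriv_nonneg (convex_Ici 0)
    · fun_prop
    · fun_prop
    · intro y hy
      have hd : HasDerivAt (fun u : ℝ => Real.sin u - u + u^3/6)
          (Real.cos y - 1 + (3 * y^2)/6) y := by
        exact (((Real.hasDerivAt_sin y).sub (hasDerivAt_id y)).add
          (((hasDerivAt_pow 3 y)).div_const 6)).congr_deriv (by ring)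
      rw [hd.deriv]
      have := Real.one_sub_sq_div_two_le_cos (x := y)
      nlinarith
  have h0 := h (Set.self_mem_Ici) (Set.mem_Ici.mpr ht) ht
  simp only [Real.sin_zero] at h0
  linarith [h0]

theorem stmt_6 (α : ℝ) (h0 : 0 < α) (h1 : α ≤ 1/2) :
    (cos (π/(3-α)))^2 <
      1/4 - (Real.sqrt 3/2) * (π*α/(3*(3-α)))
        + (1/2) * (π*α/(3*(3-α)))^2 + (Real.sqrt 3/3) * (π*α/(3*(3-α)))^3 := by
  have hπ := Real.pi_pos
  have h3α : (0:ℝ) < 3 - α := by linarith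
  set x := π*α/(3*(3-α)) with hx
  have hxpos : 0 < x := by positivity
  have hxlt : x < π := by
    rw [hx, div_lt_iff₀ (by positivity)]
    nlinarith
  have hsplit : π/(3-α) = π/3 + x := by
    rw [hx]; field_simp; ring
  have hcos : cos (π/(3-α)) = (1/2) * Real.cos x - (Real.sqrt 3/2) * Real.sin x := by
    rw [hsplit, Real.cos_add, Real.cos_pi_div_three, Real.sin_pi_div_three]
  have hs : Real.sin x < x := Real.sin_lt hxpos
  have hspos : 0 < Real.sin x := Real.sin_pos_of_pos_of_lt_pi hxpos hxlt
  have hsin2 : 2*x - (2*x)^3/6 ≤ Real.sin (2*x) := sin_ge_sub_cube' (2*x) (by linarith)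
  have h2mul : Real.sin (2*x) = 2 * Real.sin x * Real.cos x := Real.sin_two_mul x
  have hpyth : Real.sin x ^ 2 + Real.cos x ^ 2 = 1 := Real.sin_sq_add_cos_sq x
  have hsqrt3 : (0:ℝ) < Real.sqrt 3 := by positivity
  have hsq3 : Real.sqrt 3 ^ 2 = 3 := Real.sq_sqrt (by norm_num)
  have hsq : Real.sin x ^ 2 < x ^ 2 := by nlinarith
  have hm : Real.sqrt 3 * (2*x - (2*x)^3/6) ≤ Real.sqrt 3 * (2 * Real.sin x * Real.cos x) := by
    rw [← h2mul]; exact mul_le_mul_of_nonneg_left hsin2 hsqrt3.le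
  rw [hcos]
  nlinarith [hm, hsq, hsq3, hpyth]
end

section
/- For all α ∈ (0, 1/2], setting a₁ = −2 + (8/(3-α))·sin²(π/(3-α)) and b₁ = 1 − (4(1-α)/(3-α))·sin²(π/(3-α)), the inequality a₁(1 + b₁) > 4b₁ holds; equivalently a₁(1+b₁)/(4b₁) > 1 (with b₁ > 0). -/
/-!
Put `u = α / (3 - α) ∈ (0, 1/5]`, so that `π / (3 - α) = π/3 + πu/3` and
`s := sin² (π / (3 - α)) = (1 + cos ψ) / 2` with `ψ = π/3 - 2πu/3 ∈ [π/5, π/3)`.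
Concavity of `cos` on `[-π/2, π/2]` traps `cos ψ` between the chords through `π/5, π/3` and
`π/3, π/2`, which gives `3/4 + 0.7725 u ≤ s ≤ 3/4 + u`. In terms of `u` and `s` both claims are
polynomial inequalities that degenerate to equalities at `u = 0`; the first-order margin there
is positive because the lower chord has slope `5 (cos (π/5) - 1/2) / 2 ≈ 0.7725 > 3/4`.
-/

open Real

lemma cos_secant_le {x y z : ℝ} (hx : -(π / 2) ≤ x) (hxy : x ≤ y) (hyz : y ≤ z)
    (hz : z ≤ π / 2) : (z - y) * cos x + (y - x) * cos z ≤ (z - x) * cos y := by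
  rcases hxy.eq_or_lt with rfl | hxy
  · ring_nf; rfl
  rcases hyz.eq_or_lt with rfl | hyz
  · ring_nf; rfl
  have h := strictConcaveOn_cos_Icc.concaveOn.neg.secant_mono_aux1
    ⟨hx, by linarith⟩ ⟨by linarith, hz⟩ hxy hyz
  simp only [Pi.neg_apply] at h
  linarith

lemma lt_cos_pi_div_five : 0.809 < cos (π / 5) := by
  have h5 : (2.236 : ℝ) < √5 := by
    rw [Real.lt_sqrt (by norm_num)]; norm_num
  rw [cos_pi_div_five]; linarith

lemma sin_sq_pi_div_three_add (x : ℝ) :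
    sin (π / 3 + x) ^ 2 = (1 + cos (π / 3 - 2 * x)) / 2 := by
  have h : π / 3 - 2 * x = π - 2 * (π / 3 + x) := by ring
  rw [sin_sq_eq_half_sub, h, cos_pi_sub]; ring

lemma le_sin_sq_pi_div_three_add {u : ℝ} (hu0 : 0 ≤ u) (hu : u ≤ 1 / 5) :
    3 / 4 + 0.7725 * u ≤ sin (π / 3 + π * u / 3) ^ 2 := by
  have h := cos_secant_le (x := π / 5) (y := π / 3 - 2 * (π * u / 3)) (z := π / 3)
    (by linarith [pi_pos]) (by nlinarith [pi_pos]) (by nlinarith [pi_pos]) (by linarith [pi_pos])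
  rw [sin_sq_pi_div_three_add]
  rw [cos_pi_div_three] at h
  have h' : π * (2 / 15) * (5 * u * cos (π / 5) + (1 - 5 * u) / 2) ≤
      π * (2 / 15) * cos (π / 3 - 2 * (π * u / 3)) := by linarith
  have hchord := le_of_mul_le_mul_left h' (by positivity)
  nlinarith [mul_le_mul_of_nonneg_left lt_cos_pi_div_five.le hu0]

lemma sin_sq_pi_div_three_add_le {u : ℝ} (hu0 : 0 ≤ u) (hu : u ≤ 5 / 4) :
    sin (π / 3 + π * u / 3) ^ 2 ≤ 3 / 4 + u := by
  have h := cos_secant_le (x := π / 3 - 2 * (π * u / 3)) (y := π / 3) (z := π / 2)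
    (by nlinarith [pi_pos]) (by nlinarith [pi_pos]) (by linarith [pi_pos]) le_rfl
  rw [sin_sq_pi_div_three_add]
  rw [cos_pi_div_three, cos_pi_div_two] at h
  have h' : π * (1 / 6) * cos (π / 3 - 2 * (π * u / 3)) ≤ π * (1 / 6) * (1 / 2 + 2 * u) := by
    linarith
  have hchord := le_of_mul_le_mul_left h' (by positivity)
  linarith

/- The coefficients `a₁`, `b₁` written in `u = α / (3 - α)` and `s = sin² (π / (3 - α))`:
`8 / (3 - α) = 8 (1 + u) / 3` and `4 (1 - α) / (3 - α) = 4 (1 - 2u) / 3`. -/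
noncomputable def a₁ (u s : ℝ) : ℝ := -2 + 8 / 3 * (1 + u) * s

noncomputable def b₁ (u s : ℝ) : ℝ := 1 - 4 / 3 * (1 - 2 * u) * s

lemma b₁_pos {u s : ℝ} (hu0 : 0 < u) (hu : u ≤ 1 / 2) (hs : s ≤ 3 / 4 + u) : 0 < b₁ u s := by
  unfold b₁
  nlinarith [mul_le_mul_of_nonneg_left hs (by linarith : (0 : ℝ) ≤ 1 - 2 * u)]

lemma four_mul_b₁_lt_a₁_mul_one_add_b₁ {u s : ℝ} (hu0 : 0 < u) (hu : u ≤ 1 / 5)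
    (hs : 3 / 4 + 0.7725 * u ≤ s) (hs1 : s ≤ 1) : 4 * b₁ u s < a₁ u s * (1 + b₁ u s) := by
  set L := 3 / 4 + 0.7725 * u with hL
  set F : ℝ → ℝ := fun t ↦ t * (15 - 12 * u) - 4 * (1 - 2 * u) * (1 + u) * t ^ 2 with hF
  have hF_mono : F L ≤ F s := by
    have hfac : 0 ≤ 15 - 12 * u - 4 * (1 - 2 * u) * (1 + u) * (s + L) := by
      nlinarith [mul_nonneg hu0.le (sub_nonneg.2 hs1),
        mul_nonneg (mul_nonneg hu0.le hu0.le) (sub_nonneg.2 hs1)]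
    simp only [hF]
    nlinarith [mul_nonneg (sub_nonneg.2 hs) hfac]
  have hFL : 9 < F L := by
    simp only [hF, hL]
    nlinarith [mul_pos hu0 hu0, mul_pos (mul_pos hu0 hu0) hu0]
  have hdiff : a₁ u s * (1 + b₁ u s) - 4 * b₁ u s = 8 / 9 * (F s - 9) := by
    simp only [a₁, b₁, hF]; ring
  linarith

theorem stmt_7 (α : ℝ) (h0 : 0 < α) (h1 : α ≤ 1/2) :
    0 < 1 - (4*(1-α)/(3-α)) * (sin (π/(3-α)))^2 ∧
    (-2 + (8/(3-α)) * (sin (π/(3-α)))^2) *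
        (1 + (1 - (4*(1-α)/(3-α)) * (sin (π/(3-α)))^2))
      > 4 * (1 - (4*(1-α)/(3-α)) * (sin (π/(3-α)))^2) := by
  have ht : (3 : ℝ) - α ≠ 0 := by linarith
  set u := α / (3 - α) with hu_def
  have hu0 : 0 < u := div_pos h0 (by linarith)
  have hu : u ≤ 1 / 5 := by rw [div_le_iff₀ (by linarith)]; linarith
  have hθ : π / (3 - α) = π / 3 + π * u / 3 := by rw [hu_def]; field_simp; ring
  have hb : 4 * (1 - α) / (3 - α) = 4 / 3 * (1 - 2 * u) := by rw [hu_def]; field_simp; ring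
  have ha : 8 / (3 - α) = 8 / 3 * (1 + u) := by rw [hu_def]; field_simp; ring
  rw [hθ, hb, ha]
  have hs := sin_sq_pi_div_three_add_le hu0.le (by linarith)
  exact ⟨b₁_pos hu0 (by linarith) hs, four_mul_b₁_lt_a₁_mul_one_add_b₁ hu0 hu
    (le_sin_sq_pi_div_three_add hu0.le hu) (sin_sq_le_one _)⟩
end

section
/- The function t ↦ sin(αt)/sin((2-α)t) is strictly increasing on (0, π/2) for every fixed α ∈ (0, 1/2]. -/
/-!
The derivative of `sin (a t) / sin (b t)` has numerator
`a cos (a t) sin (b t) - b sin (a t) cos (b t)`, which for `a = α`, `b = 2 - α` equals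
`sin ((1 - α) · 2t) - (1 - α) sin (2t)`. This is positive for `2t ∈ (0, π]` by strict concavity
of `sin` on `[0, π]` (the chord from `0` lies strictly below the graph).
-/

open Real Set

lemma mul_sin_lt_sin_mul {c x : ℝ} (hc₀ : 0 < c) (hc₁ : c < 1) (hx₀ : 0 < x) (hxπ : x ≤ π) :
    c * sin x < sin (c * x) := by
  have h := strictConcaveOn_sin_Icc.2 (⟨le_rfl, pi_pos.le⟩ : (0 : ℝ) ∈ Icc 0 π) ⟨hx₀.le, hxπ⟩
    hx₀.ne (by linarith : 0 < 1 - c) hc₀ (by ring)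
  simpa only [smul_eq_mul, sin_zero, mul_zero, zero_add] using h

lemma mul_cos_mul_sin_sub_mul_sin_mul_cos (a b x : ℝ) :
    a * cos (a * x) * sin (b * x) - b * sin (a * x) * cos (b * x) =
      (a + b) / 2 * sin ((b - a) * x) - (b - a) / 2 * sin ((a + b) * x) := by
  rw [sub_mul, add_mul, sin_sub, sin_add]
  ring

lemma hasDerivAt_sin_mul_div_sin_mul {a b t : ℝ} (ht : sin (b * t) ≠ 0) :
    HasDerivAt (fun t => sin (a * t) / sin (b * t))
      ((a * cos (a * t) * sin (b * t) - b * sin (a * t) * cos (b * t)) / sin (b * t) ^ 2) t := by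
  have hsin : ∀ c : ℝ, HasDerivAt (fun t => sin (c * t)) (c * cos (c * t)) t := fun c => by
    simpa only [mul_comm, id_eq, mul_one] using ((hasDerivAt_id t).const_mul c).sin
  exact ((hsin a).fun_div (hsin b) ht).congr_deriv (by ring)

lemma strictMonoOn_sin_mul_div_sin_two_sub_mul {α : ℝ} (hα₀ : 0 < α) (hα₁ : α < 1) :
    StrictMonoOn (fun t => sin (α * t) / sin ((2 - α) * t)) (Ioo 0 (π / 2)) := by
  have hden : ∀ t ∈ Ioo 0 (π / 2), 0 < sin ((2 - α) * t) := fun t ⟨ht₀, htπ⟩ =>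
    sin_pos_of_pos_of_lt_pi (mul_pos (by linarith) ht₀) (by nlinarith)
  have hderiv : ∀ t ∈ Ioo 0 (π / 2), HasDerivAt (fun t => sin (α * t) / sin ((2 - α) * t))
      ((sin ((1 - α) * (2 * t)) - (1 - α) * sin (2 * t)) / sin ((2 - α) * t) ^ 2) t := by
    intro t ht
    convert hasDerivAt_sin_mul_div_sin_mul (a := α) (hden t ht).ne' using 2
    rw [mul_cos_mul_sin_sub_mul_sin_mul_cos, show α + (2 - α) = 2 by ring,
      show (2 - α - α) * t = (1 - α) * (2 * t) by ring]
    ring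
  refine strictMonoOn_of_deriv_pos (convex_Ioo 0 (π / 2))
    (fun t ht => (hderiv t ht).continuousAt.continuousWithinAt) fun t ht => ?_
  rw [interior_Ioo] at ht
  rw [(hderiv t ht).deriv]
  have hnum : (1 - α) * sin (2 * t) < sin ((1 - α) * (2 * t)) :=
    mul_sin_lt_sin_mul (by linarith) (by linarith) (by linarith [ht.1]) (by linarith [ht.2])
  exact div_pos (sub_pos.2 hnum) (pow_pos (hden t ht) 2)

theorem stmt_8 (α : ℝ) (h0 : 0 < α) (h1 : α ≤ 1/2) :
    StrictMonoOn (fun t : ℝ => sin (α*t) / sin ((2-α)*t)) (Set.Ioo 0 (π/2)) :=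
  strictMonoOn_sin_mul_div_sin_two_sub_mul h0 (by linarith)
end

section
/- For all α ∈ (0, 1/8], the inequality (2 − α − sin(πα)/2)² / (2(2-α)(4 − 2α − sin(πα)/2)) > cos²(π/(3-α)) holds. -/
/-!
Both sides are compared with explicit functions of `α`. Since `π / (3 - α) = π / 3 + t` with
`t = π α / (3 (3 - α))` small, `cos (π / (3 - α)) ≤ 1/2 - (√3/2) sin t ≤ 1/2 - 0.905 α / (3 - α)`.
The left-hand side is decreasing in `sin (π α)`, and `sin (π α) ≤ 3.1416 α - 5 α³` by the Taylor
bound of order five. What remains is a polynomial inequality in `α`; both sides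
equal `1/4` at `α = 0` and separate only linearly, so the numerical constants leave little slack.
-/

open Real

lemma sin_le_sub_cube_add {x : ℝ} (hx₀ : 0 ≤ x) (hx₁ : x ≤ 1) :
    sin x ≤ x - x ^ 3 / 6 + x ^ 5 / 100 := by
  have h := sin_bound (x := x) (by rwa [abs_of_nonneg hx₀])
  rw [abs_of_nonneg hx₀] at h
  linarith [(abs_le.1 h).2]

lemma cos_pi_div_three_add_le (t : ℝ) : cos (π / 3 + t) ≤ 1 / 2 - √3 / 2 * sin t := by
  rw [cos_add, cos_pi_div_three, sin_pi_div_three]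
  linarith [cos_le_one t]

lemma sin_pi_mul_le {α : ℝ} (h0 : 0 ≤ α) (h1 : α ≤ 1 / 8) :
    sin (π * α) ≤ 3.1416 * α - 5 * α ^ 3 := by
  have hπl := pi_gt_d4
  have hπu := pi_lt_d4
  set x := π * α
  have hx₀ : 0 ≤ x := by positivity
  have hx₁ : x ≤ 0.4 := by nlinarith
  have h3 : 3.1415 ^ 3 * α ^ 3 ≤ x ^ 3 := by
    rw [← mul_pow]; exact pow_le_pow_left₀ (by positivity) (by nlinarith) 3
  have h5 : x ^ 5 ≤ 0.16 * x ^ 3 := by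
    have : x ^ 2 ≤ 0.16 := by nlinarith
    nlinarith [pow_nonneg hx₀ 3]
  nlinarith [sin_le_sub_cube_add hx₀ (by linarith), pow_nonneg h0 3]

lemma cos_pi_div_three_sub_le {α : ℝ} (h0 : 0 ≤ α) (h1 : α ≤ 1 / 8) :
    cos (π / (3 - α)) ≤ 1 / 2 - 0.905 * α / (3 - α) := by
  have h3 : 0 < 3 - α := by linarith
  set β := α / (3 - α) with hβ
  have hβ0 : 0 ≤ β := by positivity
  have hβ1 : β ≤ 1 / 23 := by rw [hβ, div_le_iff₀ h3]; linarith
  have hsplit : π / (3 - α) = π / 3 + π / 3 * β := by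
    rw [hβ]; field_simp; ring
  have hπl := pi_gt_d4
  have hπu := pi_lt_d4
  have hsqrt3 : 1.732 ≤ √3 := by
    rw [le_sqrt (by norm_num) (by norm_num)]; norm_num
  have ht1 : π / 3 * β ≤ 0.05 := by nlinarith
  have ht : 1.0471 * β ≤ π / 3 * β := by nlinarith
  set t := π / 3 * β
  have ht0 : 0 ≤ t := by positivity
  have hsin : 0.9995 * t ≤ sin t := by
    nlinarith [sin_ge_sub_cube ht0, pow_le_pow_left₀ ht0 ht1 2]
  -- `0.905 < (√3 / 2) (π / 3) (1 - t² / 6)`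
  have : 0.905 * β ≤ √3 / 2 * sin t := by
    nlinarith [mul_le_mul_of_nonneg_right hsqrt3 (by linarith : 0 ≤ sin t)]
  rw [hsplit, mul_div_assoc]
  linarith [cos_pi_div_three_add_le t]

lemma antitoneOn_sub_sq_div {a : ℝ} (ha : a < 2) :
    AntitoneOn (fun s => (2 - a - s / 2) ^ 2 / (2 * (2 - a) * (4 - 2 * a - s / 2)))
      (Set.Iic (4 - 2 * a)) := by
  intro s hs s' hs' hss'
  simp only [Set.mem_Iic] at hs hs'
  rw [div_le_div_iff₀ (by nlinarith) (by nlinarith)]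
  have hu : 0 ≤ 2 - a := by linarith
  have hp : 0 ≤ 2 - a - s / 2 := by linarith
  have hq : 0 ≤ 2 - a - s' / 2 := by linarith
  have hdiff : (2 - a - s / 2) ^ 2 * (2 * (2 - a) * (4 - 2 * a - s' / 2))
      - (2 - a - s' / 2) ^ 2 * (2 * (2 - a) * (4 - 2 * a - s / 2))
      = (2 - a) * (s' - s) * ((2 - a) * ((2 - a - s / 2) + (2 - a - s' / 2))
          + (2 - a - s / 2) * (2 - a - s' / 2)) := by
    ring
  have := mul_nonneg (mul_nonneg hu (sub_nonneg.2 hss'))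
    (add_nonneg (mul_nonneg hu (add_nonneg hp hq)) (mul_nonneg hp hq))
  linarith

lemma sq_lt_ratio_at_sin_bound {α : ℝ} (h0 : 0 < α) (h1 : α ≤ 1 / 8) :
    (1 / 2 - 0.905 * α / (3 - α)) ^ 2 <
      (2 - α - (3.1416 * α - 5 * α ^ 3) / 2) ^ 2 /
        (2 * (2 - α) * (4 - 2 * α - (3.1416 * α - 5 * α ^ 3) / 2)) := by
  have h3 : 0 < 3 - α := by linarith
  have hC : 1 / 2 - 0.905 * α / (3 - α) = (3 - 2.81 * α) / (2 * (3 - α)) := by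
    field_simp; ring
  rw [hC, div_pow, div_lt_div_iff₀ (by positivity) (by nlinarith [pow_nonneg h0.le 3])]
  nlinarith [pow_pos h0 2, pow_pos h0 3, pow_pos h0 4, pow_pos h0 5, pow_pos h0 6,
    mul_nonneg (pow_pos h0 2).le (sub_nonneg.2 h1)]

theorem stmt_11 (α : ℝ) (h0 : 0 < α) (h1 : α ≤ 1/8) :
    (2 - α - sin (π*α)/2)^2 / (2*(2-α)*(4 - 2*α - sin (π*α)/2))
      > (cos (π/(3-α)))^2 := by
  have hcos : 0 ≤ cos (π / (3 - α)) := by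
    apply cos_nonneg_of_mem_Icc
    constructor
    · linarith [pi_pos, div_nonneg pi_pos.le (by linarith : (0:ℝ) ≤ 3 - α)]
    · rw [div_le_div_iff₀ (by linarith) two_pos]; nlinarith [pi_pos]
  have hsin := sin_pi_mul_le h0.le h1
  calc cos (π / (3 - α)) ^ 2 ≤ (1 / 2 - 0.905 * α / (3 - α)) ^ 2 :=
        pow_le_pow_left₀ hcos (cos_pi_div_three_sub_le h0.le h1) 2
    _ < _ := sq_lt_ratio_at_sin_bound h0 h1
    _ ≤ _ := antitoneOn_sub_sq_div (by linarith)
        (Set.mem_Iic.2 (by linarith [sin_le_one (π * α)]))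
        (Set.mem_Iic.2 (by nlinarith [pow_pos h0 3])) hsin
end

section
/- The function b ↦ (1-b)²·((3/4)b + √(b(1-b))) is increasing on (0, 1/5]. -/
/-!
With `s = √(x(1-x))`, the derivative at `x ∈ (0, 1)` is
`(1 - x) * ((3/2) s (1 - 3x) + (1 - x)(1 - 6x)) / (2s)`. For `x ≤ 1/6` both terms of the
bracket are nonnegative and the first is positive; for `1/6 ≤ x ≤ 1/5` the first term still
dominates the second, as comparing squares reduces to the cubic inequality
`9/4 (1-3x)² x > (1-x)(6x-1)²`.
-/

open Real

lemma hasDerivAt_sqrt_mul_one_sub {x : ℝ} (h0 : 0 < x) (h1 : x < 1) :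
    HasDerivAt (fun b : ℝ => √(b * (1 - b))) ((1 - 2 * x) / (2 * √(x * (1 - x)))) x := by
  have hpoly : HasDerivAt (fun b : ℝ => b * (1 - b)) (1 * (1 - x) + x * (-1)) x :=
    (hasDerivAt_id' x).mul ((hasDerivAt_id' x).const_sub 1)
  exact hpoly.sqrt (by nlinarith) |>.congr_deriv (by ring)

lemma hasDerivAt_one_sub_sq_mul {x : ℝ} (h0 : 0 < x) (h1 : x < 1) :
    HasDerivAt (fun b : ℝ => (1 - b) ^ 2 * (3 / 4 * b + √(b * (1 - b))))
      ((1 - x) * (3 / 2 * √(x * (1 - x)) * (1 - 3 * x) + (1 - x) * (1 - 6 * x))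
        / (2 * √(x * (1 - x)))) x := by
  have hprod : 0 < x * (1 - x) := by nlinarith
  have hs : √(x * (1 - x)) ≠ 0 := (sqrt_pos.mpr hprod).ne'
  have hs2 := sq_sqrt hprod.le
  have hderiv := (((hasDerivAt_id' x).const_sub 1).pow 2).mul
    (((hasDerivAt_id' x).const_mul (3 / 4 : ℝ)).add (hasDerivAt_sqrt_mul_one_sub h0 h1))
  refine hderiv.congr_deriv ?_
  simp only [Pi.add_apply, Pi.pow_apply]
  field_simp
  linear_combination 32 * (x - 1) * hs2

lemma deriv_numerator_pos_of_le_one_fifth {x : ℝ} (h0 : 0 < x) (h : x ≤ 1 / 5) :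
    0 < 3 / 2 * √(x * (1 - x)) * (1 - 3 * x) + (1 - x) * (1 - 6 * x) := by
  have hprod : 0 < x * (1 - x) := by nlinarith
  have h3 : 0 < 1 - 3 * x := by linarith
  set s := √(x * (1 - x))
  have hs : 0 < s := sqrt_pos.mpr hprod
  rcases lt_or_ge 0 (1 - 6 * x) with h6 | h6
  · nlinarith [mul_pos hs h3]
  · have hsq : ((1 - x) * (6 * x - 1)) ^ 2 < (3 / 2 * s * (1 - 3 * x)) ^ 2 := by
      have : (3 / 2 * s * (1 - 3 * x)) ^ 2 = 9 / 4 * (1 - 3 * x) ^ 2 * (x * (1 - x)) := by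
        rw [← sq_sqrt hprod.le]; ring
      rw [this]
      nlinarith [mul_nonneg (sub_nonneg.2 h) (neg_nonneg.2 h6)]
    have := lt_of_pow_lt_pow_left₀ 2 (by positivity) hsq
    linarith

theorem stmt_15 :
    StrictMonoOn (fun b : ℝ => (1-b)^2 * ((3/4)*b + Real.sqrt (b*(1-b))))
      (Set.Ioc 0 (1/5)) := by
  refine strictMonoOn_of_deriv_pos (convex_Ioc _ _) (by fun_prop) fun x hx => ?_
  rw [interior_Ioc] at hx
  obtain ⟨hx0, hx5⟩ := hx
  have hprod : 0 < x * (1 - x) := by nlinarith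
  rw [(hasDerivAt_one_sub_sq_mul hx0 (by linarith)).deriv]
  exact div_pos (mul_pos (by linarith) (deriv_numerator_pos_of_le_one_fifth hx0 hx5.le))
    (by positivity)
end

section
/- For real a, b with b > 0 and |a(1+b)/(4b)| ≤ 1, setting μ = a(1+b)/(4b), the minimum over φ ∈ ℝ of (1−a+b)² + 16b·cos²(φ/2)·(μ − sin²(φ/2)) equals (1-b)²·(1 − a²/(4b)), attained when cos φ = −μ. -/
open Real

theorem stmt_18 (a b : ℝ) (hb : 0 < b)
    (hμ : |a*(1+b)/(4*b)| ≤ 1) :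
    (∀ φ : ℝ,
        (1-b)^2 * (1 - a^2/(4*b)) ≤
        (1 - a + b)^2 + 16*b*(cos (φ/2))^2 * (a*(1+b)/(4*b) - (sin (φ/2))^2)) ∧
    (∀ φ : ℝ, cos φ = -(a*(1+b)/(4*b)) →
        (1 - a + b)^2 + 16*b*(cos (φ/2))^2 * (a*(1+b)/(4*b) - (sin (φ/2))^2)
          = (1-b)^2 * (1 - a^2/(4*b))) := by
  have key : ∀ φ : ℝ,
      (1 - a + b)^2 + 16*b*(cos (φ/2))^2 * (a*(1+b)/(4*b) - (sin (φ/2))^2)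
        = (1-b)^2 * (1 - a^2/(4*b)) + (4*b*cos φ + a*(1+b))^2/(4*b) := by
    intro φ
    have hc : cos (φ/2) ^ 2 = 1/2 + cos φ / 2 := by
      have := Real.cos_sq (φ/2)
      rwa [show 2*(φ/2) = φ by ring] at this
    have hs : sin (φ/2) ^ 2 = 1 - cos (φ/2) ^ 2 := by
      have := sin_sq_add_cos_sq (φ/2); linarith
    rw [hs, hc]
    field_simp
    ring
  constructor
  · intro φ
    rw [key φ]
    have : 0 ≤ (4*b*cos φ + a*(1+b))^2/(4*b) :=
      div_nonneg (sq_nonneg _) (by linarith)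
    linarith
  · intro φ hφ
    rw [key φ, hφ]
    field_simp
    ring
end
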